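/- Let S ∈ ℂ[x] be a monic squarefree polynomial of odd degree 2g+1 with g ≥ 1, let κ ∈ ℂ with κ ≠ 0, κ ≠ 1, let U, V ∈ ℂ[x] be coprime with U/V nonconstant, and suppose there exists G ∈ ℂ(x) with S·G² = (U/V)·(U/V − 1)·(U/V − κ). Then there exist a partition of the set of roots of S into four (possibly empty) subsets R₁, R₂, R₃, R₄ and polynomials A, B, C, D ∈ ℂ[x] such that U = A²·∏_{α∈R₁}(x−α), V = B²·∏_{α∈R₂}(x−α), U−V = C²·∏_{α∈R₃}(x−α), and U−κV = D²·∏_{α∈R₄}(x−α). -/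

import Mathlib

open Polynomial

/-! Clearing denominators, `S · U · V · (U - V) · (U - κ V)` is the square of a rational function,
hence of a polynomial because `ℂ[x]` is integrally closed. The four factors are pairwise coprime (they
are the fibres of `U / V` over `0, ∞, 1, κ`), so at each point at most one of them vanishes, and
comparing parities of root multiplicities shows that the roots of odd multiplicity of the four
factors partition the simple roots of `S`. Over an algebraically closed field every polynomial is a
square times the product of `x - α` over its roots of odd multiplicity. -/

theorem isSquare_of_isSquare_algebraMap {R K : Type*} [CommRing R] [IsDomain R]
    [IsIntegrallyClosed R] [Field K] [Algebra R K] [IsFractionRing R K] {r : R}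
    (h : IsSquare (algebraMap R K r)) : IsSquare r := by
  obtain ⟨x, hx⟩ := h
  have : IsIntegral R (x ^ 2) := sq x ▸ hx ▸ isIntegral_algebraMap
  obtain ⟨y, rfl⟩ := IsIntegrallyClosed.exists_algebraMap_eq_of_isIntegral_pow two_pos this
  exact ⟨y, IsFractionRing.injective R K (by rw [hx, map_mul])⟩

theorem mul_sq_eq_of_eq_div {L : Type*} [Field L] {s g u v k : L} (hv : v ≠ 0)
    (h : s * g ^ 2 = u / v * (u / v - 1) * (u / v - k)) :
    s * (u * v * (u - v) * (u - k * v)) = (s * g * v ^ 2) ^ 2 := by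
  calc s * (u * v * (u - v) * (u - k * v))
      = s * (u / v * (u / v - 1) * (u / v - k)) * v ^ 4 := by field_simp
    _ = (s * g * v ^ 2) ^ 2 := by rw [← h]; ring

theorem IsCoprime.sub_mul_sub_mul {R : Type*} [CommRing R] {U V a b : R} (h : IsCoprime U V)
    (hab : IsUnit (b - a)) : IsCoprime (U - a * V) (U - b * V) := by
  obtain ⟨p, q, hpq⟩ := h
  obtain ⟨w, hw⟩ := hab.exists_left_inv
  exact ⟨w * (b * p + q), -(w * (a * p + q)), by linear_combination w * (b - a) * hpq + hw⟩

theorem IsCoprime.sub_mul_right {R : Type*} [CommRing R] {U V : R} (h : IsCoprime U V) (a : R) :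
    IsCoprime V (U - a * V) := by
  rw [sub_eq_add_neg, ← neg_mul]
  exact h.symm.add_mul_right_right (-a)

theorem IsCoprime.rootMultiplicity_eq_zero_or {R : Type*} [CommRing R] [Nontrivial R] {p q : R[X]}
    (h : IsCoprime p q) (α : R) :
    rootMultiplicity α p = 0 ∨ rootMultiplicity α q = 0 := by
  refine or_iff_not_imp_left.mpr fun hp => rootMultiplicity_eq_zero fun hq => ?_
  obtain ⟨a, b, hab⟩ := h
  have hp := (rootMultiplicity_pos'.mp (Nat.pos_of_ne_zero hp)).2
  simpa [hp.eq_zero, hq.eq_zero] using congrArg (eval α) hab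

section OddRoots

variable {R : Type*} [CommRing R] [IsDomain R] [DecidableEq R]

noncomputable def oddRoots (p : R[X]) : Finset R :=
  p.roots.toFinset.filter fun α => Odd (p.roots.count α)

theorem mem_oddRoots {p : R[X]} {α : R} : α ∈ oddRoots p ↔ Odd (rootMultiplicity α p) := by
  rw [oddRoots, Finset.mem_filter, Multiset.mem_toFinset, count_roots, and_iff_right_iff_imp]
  exact fun h => Multiset.count_pos.mp (count_roots p ▸ h.pos)

theorem IsCoprime.disjoint_oddRoots {p q : R[X]} (h : IsCoprime p q) :
    Disjoint (oddRoots p) (oddRoots q) := by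
  refine Finset.disjoint_left.mpr fun α hp hq => ?_
  rw [mem_oddRoots] at hp hq
  rcases h.rootMultiplicity_eq_zero_or α with h0 | h0
  · exact Nat.not_odd_zero (h0 ▸ hp)
  · exact Nat.not_odd_zero (h0 ▸ hq)

theorem IsCoprime.oddRoots_mul {p q : R[X]} (h : IsCoprime p q) (hpq : p * q ≠ 0) :
    oddRoots (p * q) = oddRoots p ∪ oddRoots q := by
  ext α
  rw [Finset.mem_union, mem_oddRoots, mem_oddRoots, mem_oddRoots, rootMultiplicity_mul hpq]
  rcases h.rootMultiplicity_eq_zero_or α with h0 | h0 <;> simp [h0]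

theorem oddRoots_eq_of_isSquare_mul {p q : R[X]} (hpq : IsSquare (p * q)) (h0 : p * q ≠ 0) :
    oddRoots p = oddRoots q := by
  obtain ⟨t, ht⟩ := hpq
  ext α
  have hmul := rootMultiplicity_mul (x := α) h0
  rw [ht, rootMultiplicity_mul (ht ▸ h0)] at hmul
  rw [mem_oddRoots, mem_oddRoots, Nat.odd_iff, Nat.odd_iff]
  omega

end OddRoots

section Field

variable {K : Type*} [Field K]

theorem exists_eq_sq_mul_prod_oddRoots [IsAlgClosed K] [DecidableEq K] (p : K[X]) :
    ∃ A : K[X], p = A ^ 2 * ∏ α ∈ oddRoots p, (X - C α) := by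
  obtain ⟨d, hd⟩ := IsAlgClosed.exists_pow_nat_eq p.leadingCoeff two_pos
  refine ⟨C d * ∏ α ∈ p.roots.toFinset, (X - C α) ^ (p.roots.count α / 2), ?_⟩
  conv_lhs => rw [(IsAlgClosed.splits p).eq_prod_roots, Finset.prod_multiset_map_count]
  rw [mul_pow, ← map_pow, hd, ← Finset.prod_pow, oddRoots, Finset.prod_filter, mul_assoc,
    ← Finset.prod_mul_distrib]
  congr 1
  refine Finset.prod_congr rfl fun α _ => ?_
  conv_lhs => rw [← Nat.div_add_mod' (p.roots.count α) 2, pow_add, pow_mul]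
  congr 1
  split_ifs with ho
  · rw [Nat.odd_iff.mp ho, pow_one]
  · rw [Nat.not_odd_iff.mp ho, pow_zero]

theorem oddRoots_eq_roots_toFinset [PerfectField K] [DecidableEq K] {p : K[X]}
    (hp : Squarefree p) : oddRoots p = p.roots.toFinset := by
  refine Finset.filter_true_of_mem fun α hα => ?_
  have hle := count_roots_le_one (PerfectField.separable_iff_squarefree.mpr hp) α
  have hpos := Multiset.count_pos.mpr (Multiset.mem_toFinset.mp hα)
  rw [Nat.le_antisymm hle hpos]
  exact odd_one

section Pencil

variable {U V : K[X]}

theorem ne_zero_of_div_ne_C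
    (hF : ∀ c : K, algebraMap K[X] (RatFunc K) U / algebraMap K[X] (RatFunc K) V ≠ RatFunc.C c) :
    V ≠ 0 := by
  rintro rfl
  exact hF 0 (by rw [map_zero, div_zero, map_zero])

theorem sub_C_mul_ne_zero_of_div_ne_C
    (hF : ∀ c : K, algebraMap K[X] (RatFunc K) U / algebraMap K[X] (RatFunc K) V ≠ RatFunc.C c)
    (c : K) : U - C c * V ≠ 0 := by
  intro h
  refine hF c ?_
  rw [sub_eq_zero.mp h, map_mul, RatFunc.algebraMap_C,
    mul_div_cancel_right₀ _ (RatFunc.algebraMap_ne_zero (ne_zero_of_div_ne_C hF))]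

theorem IsCoprime.sub_C_mul_sub_C_mul (h : IsCoprime U V) {a b : K} (hab : a ≠ b) :
    IsCoprime (U - C a * V) (U - C b * V) :=
  h.sub_mul_sub_mul (by rw [← C_sub]; exact isUnit_C.mpr (sub_ne_zero.mpr hab.symm).isUnit)

theorem isSquare_mul_of_mul_sq_eq_div {S : K[X]} {κ : K} {G : RatFunc K} (hV : V ≠ 0)
    (h : algebraMap K[X] (RatFunc K) S * G ^ 2 =
      algebraMap K[X] (RatFunc K) U / algebraMap K[X] (RatFunc K) V *
        (algebraMap K[X] (RatFunc K) U / algebraMap K[X] (RatFunc K) V - 1) *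
        (algebraMap K[X] (RatFunc K) U / algebraMap K[X] (RatFunc K) V - RatFunc.C κ)) :
    IsSquare (S * (U * V * (U - V) * (U - C κ * V))) := by
  refine isSquare_of_isSquare_algebraMap (K := RatFunc K)
    ⟨algebraMap K[X] (RatFunc K) S * G * algebraMap K[X] (RatFunc K) V ^ 2, ?_⟩
  rw [← sq, ← mul_sq_eq_of_eq_div (RatFunc.algebraMap_ne_zero hV) h]
  simp only [map_mul, map_sub, RatFunc.algebraMap_C]

end Pencil

end Field

theorem stmt6_general (S : Polynomial ℂ)
    (hsf : Squarefree S)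
    (κ : ℂ) (hκ0 : κ ≠ 0) (hκ1 : κ ≠ 1)
    (U V : Polynomial ℂ) (hUV : IsCoprime U V)
    (hFnc : ∀ c : ℂ,
      (algebraMap (Polynomial ℂ) (RatFunc ℂ) U) / (algebraMap (Polynomial ℂ) (RatFunc ℂ) V)
        ≠ RatFunc.C c)
    (hrel : ∃ G : RatFunc ℂ,
      (algebraMap (Polynomial ℂ) (RatFunc ℂ) S) * G ^ 2 =
        ((algebraMap (Polynomial ℂ) (RatFunc ℂ) U) / (algebraMap (Polynomial ℂ) (RatFunc ℂ) V)) *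
        ((algebraMap (Polynomial ℂ) (RatFunc ℂ) U) / (algebraMap (Polynomial ℂ) (RatFunc ℂ) V) - 1) *
        ((algebraMap (Polynomial ℂ) (RatFunc ℂ) U) / (algebraMap (Polynomial ℂ) (RatFunc ℂ) V)
          - RatFunc.C κ)) :
    ∃ R₁ R₂ R₃ R₄ : Finset ℂ,
      (R₁ ∪ R₂ ∪ R₃ ∪ R₄ = S.roots.toFinset) ∧
      Disjoint R₁ R₂ ∧ Disjoint R₁ R₃ ∧ Disjoint R₁ R₄ ∧
      Disjoint R₂ R₃ ∧ Disjoint R₂ R₄ ∧ Disjoint R₃ R₄ ∧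
      ∃ A B C' D : Polynomial ℂ,
        U = A ^ 2 * ∏ α ∈ R₁, (X - C α) ∧
        V = B ^ 2 * ∏ α ∈ R₂, (X - C α) ∧
        U - V = C' ^ 2 * ∏ α ∈ R₃, (X - C α) ∧
        U - C κ * V = D ^ 2 * ∏ α ∈ R₄, (X - C α) := by
  obtain ⟨G, hG⟩ := hrel
  have hV := ne_zero_of_div_ne_C hFnc
  have hP : U * V * (U - V) * (U - C κ * V) ≠ 0 := by
    have hne := sub_C_mul_ne_zero_of_div_ne_C hFnc
    refine mul_ne_zero (mul_ne_zero (mul_ne_zero ?_ hV) ?_) (hne κ)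
    · simpa using hne 0
    · simpa using hne 1
  have c13 : IsCoprime U (U - V) := by simpa using hUV.sub_C_mul_sub_C_mul zero_ne_one
  have c14 : IsCoprime U (U - C κ * V) := by simpa using hUV.sub_C_mul_sub_C_mul hκ0.symm
  have c23 : IsCoprime V (U - V) := by simpa using hUV.sub_mul_right 1
  have c24 : IsCoprime V (U - C κ * V) := hUV.sub_mul_right (C κ)
  have c34 : IsCoprime (U - V) (U - C κ * V) := by simpa using hUV.sub_C_mul_sub_C_mul hκ1.symm
  refine ⟨oddRoots U, oddRoots V, oddRoots (U - V), oddRoots (U - C κ * V), ?_,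
    hUV.disjoint_oddRoots, c13.disjoint_oddRoots, c14.disjoint_oddRoots,
    c23.disjoint_oddRoots, c24.disjoint_oddRoots, c34.disjoint_oddRoots, ?_⟩
  · rw [← oddRoots_eq_roots_toFinset hsf, oddRoots_eq_of_isSquare_mul
      (isSquare_mul_of_mul_sq_eq_div hV hG) (mul_ne_zero hsf.ne_zero hP),
      ((c14.mul_left c24).mul_left c34).oddRoots_mul hP,
      (c13.mul_left c23).oddRoots_mul (left_ne_zero_of_mul hP),
      hUV.oddRoots_mul (left_ne_zero_of_mul (left_ne_zero_of_mul hP))]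
  · obtain ⟨A, hA⟩ := exists_eq_sq_mul_prod_oddRoots U
    obtain ⟨B, hB⟩ := exists_eq_sq_mul_prod_oddRoots V
    obtain ⟨C', hC'⟩ := exists_eq_sq_mul_prod_oddRoots (U - V)
    obtain ⟨D, hD⟩ := exists_eq_sq_mul_prod_oddRoots (U - C κ * V)
    exact ⟨A, B, C', D, hA, hB, hC', hD⟩

theorem stmt6 (g : ℕ) (hg : 1 ≤ g) (S : Polynomial ℂ) (hmonic : S.Monic)
    (hsf : Squarefree S) (hdeg : S.natDegree = 2 * g + 1)
    (κ : ℂ) (hκ0 : κ ≠ 0) (hκ1 : κ ≠ 1)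
    (U V : Polynomial ℂ) (hUV : IsCoprime U V)
    (hFnc : ∀ c : ℂ,
      (algebraMap (Polynomial ℂ) (RatFunc ℂ) U) / (algebraMap (Polynomial ℂ) (RatFunc ℂ) V)
        ≠ RatFunc.C c)
    (hrel : ∃ G : RatFunc ℂ,
      (algebraMap (Polynomial ℂ) (RatFunc ℂ) S) * G ^ 2 =
        ((algebraMap (Polynomial ℂ) (RatFunc ℂ) U) / (algebraMap (Polynomial ℂ) (RatFunc ℂ) V)) *
        ((algebraMap (Polynomial ℂ) (RatFunc ℂ) U) / (algebraMap (Polynomial ℂ) (RatFunc ℂ) V) - 1) *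
        ((algebraMap (Polynomial ℂ) (RatFunc ℂ) U) / (algebraMap (Polynomial ℂ) (RatFunc ℂ) V)
          - RatFunc.C κ)) :
    ∃ R₁ R₂ R₃ R₄ : Finset ℂ,
      (R₁ ∪ R₂ ∪ R₃ ∪ R₄ = S.roots.toFinset) ∧
      Disjoint R₁ R₂ ∧ Disjoint R₁ R₃ ∧ Disjoint R₁ R₄ ∧
      Disjoint R₂ R₃ ∧ Disjoint R₂ R₄ ∧ Disjoint R₃ R₄ ∧
      ∃ A B C' D : Polynomial ℂ,
        U = A ^ 2 * ∏ α ∈ R₁, (X - C α) ∧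
        V = B ^ 2 * ∏ α ∈ R₂, (X - C α) ∧
        U - V = C' ^ 2 * ∏ α ∈ R₃, (X - C α) ∧
        U - C κ * V = D ^ 2 * ∏ α ∈ R₄, (X - C α) :=
  stmt6_general S hsf κ hκ0 hκ1 U V hUV hFnc hrel
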